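/- Fix M̃ ∈ M₂, h, r ∈ ℝ², and t ∈ ℝ, and for a ∈ ℝ let B_a = [M̃ r; hᵀ (a + t)]. If there exists a₀ ∈ ℝ such that a ∈ σ_L(B_a) for all a ≥ a₀, then: (i) there exists a₁ ∈ ℝ such that a is an interior Lorentz eigenvalue of B_a for all a ≥ a₁; and (ii) t = 0, hᵀr = 0, and hᵀ adj(M̃) r = 0, where adj denotes the adjugate matrix. -/

import Mathlib

open Matrix

noncomputable section

/-- Euclidean norm of a vector in `ℝ^n`. -/
def vecEnorm {n : ℕ} (x : Fin n → ℝ) : ℝ := Real.sqrt (∑ i, x i ^ 2)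

/-- The Lorentz cone in `ℝ^(n+1)`: vectors `(ξ, η)` with `‖ξ‖ ≤ η`. -/
def lorentzCone (n : ℕ) : Set (Fin (n + 1) → ℝ) :=
  {x | vecEnorm (fun i : Fin n => x i.castSucc) ≤ x (Fin.last n)}

/-- `x` is a Lorentz eigenvector of `A` associated with the Lorentz eigenvalue `l`. -/
def IsLEigenvector {n : ℕ} (A : Matrix (Fin (n + 1)) (Fin (n + 1)) ℝ) (l : ℝ)
    (x : Fin (n + 1) → ℝ) : Prop :=
  x ≠ 0 ∧ x ∈ lorentzCone n ∧ (A - l • 1) *ᵥ x ∈ lorentzCone n ∧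
    x ⬝ᵥ ((A - l • 1) *ᵥ x) = 0

/-- The Lorentz spectrum of `A`. -/
def sigmaL {n : ℕ} (A : Matrix (Fin (n + 1)) (Fin (n + 1)) ℝ) : Set ℝ :=
  {l | ∃ x, IsLEigenvector A l x}

/-- The interior Lorentz spectrum of `A`. -/
def sigmaInt {n : ℕ} (A : Matrix (Fin (n + 1)) (Fin (n + 1)) ℝ) : Set ℝ :=
  {l | ∃ x, IsLEigenvector A l x ∧
    vecEnorm (fun i : Fin n => x i.castSucc) < x (Fin.last n)}

/-- The boundary Lorentz spectrum of `A`. -/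
def sigmaBd {n : ℕ} (A : Matrix (Fin (n + 1)) (Fin (n + 1)) ℝ) : Set ℝ :=
  {l | ∃ x, IsLEigenvector A l x ∧
    vecEnorm (fun i : Fin n => x i.castSucc) = x (Fin.last n)}

/-- The block matrix `[X u; vᵀ a]` in `M₃`. -/
def blk (X : Matrix (Fin 2) (Fin 2) ℝ) (u v : Fin 2 → ℝ) (a : ℝ) :
    Matrix (Fin 3) (Fin 3) ℝ :=
  Matrix.of (Fin.snoc (fun i : Fin 2 => Fin.snoc (X i) (u i)) (Fin.snoc v a))

/-! ### Auxiliary lemmas on the Euclidean norm -/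

/-- The canonical copy of a vector in `EuclideanSpace`. -/
def Evec {n : ℕ} (x : Fin n → ℝ) : EuclideanSpace ℝ (Fin n) := (WithLp.equiv 2 _).symm x

lemma enorm_eq {n : ℕ} (x : Fin n → ℝ) : vecEnorm x = ‖Evec x‖ := by
  rw [EuclideanSpace.norm_eq]; simp [vecEnorm, Evec, Real.norm_eq_abs, sq_abs]

lemma enorm_nonneg' {n : ℕ} (x : Fin n → ℝ) : 0 ≤ vecEnorm x := Real.sqrt_nonneg _

lemma vecEnorm_eq_zero' {n : ℕ} {x : Fin n → ℝ} (hx : vecEnorm x = 0) : x = 0 := by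
  rw [enorm_eq] at hx
  have := norm_eq_zero.mp hx
  funext i
  exact congrArg (fun v : EuclideanSpace ℝ (Fin n) => v i) this

lemma abs_le_enorm {n : ℕ} (x : Fin n → ℝ) (i : Fin n) : |x i| ≤ vecEnorm x := by
  rw [← Real.sqrt_sq_eq_abs]
  apply Real.sqrt_le_sqrt
  exact Finset.single_le_sum (fun j _ => sq_nonneg (x j)) (Finset.mem_univ i)

lemma dot_le_enorm {n : ℕ} (x y : Fin n → ℝ) : x ⬝ᵥ y ≤ vecEnorm x * vecEnorm y := by
  rw [enorm_eq, enorm_eq]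
  have h := real_inner_le_norm (Evec x) (Evec y)
  have : (inner ℝ (Evec x) (Evec y) : ℝ) = x ⬝ᵥ y := by
    simp [Evec, PiLp.inner_apply, RCLike.inner_apply, dotProduct, mul_comm]
  linarith

lemma neg_dot_le_enorm {n : ℕ} (x y : Fin n → ℝ) : -(vecEnorm x * vecEnorm y) ≤ x ⬝ᵥ y := by
  have h := dot_le_enorm (-x) y
  have h2 : (-x) ⬝ᵥ y = -(x ⬝ᵥ y) := by simp
  have h3 : vecEnorm (-x) = vecEnorm x := by
    rw [enorm_eq, enorm_eq]
    have : Evec (-x) = -(Evec x) := rfl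
    rw [this, norm_neg]
  rw [h2, h3] at h; linarith

lemma enorm_smul' {n : ℕ} (c : ℝ) (x : Fin n → ℝ) :
    vecEnorm (fun i => c * x i) = |c| * vecEnorm x := by
  have : Evec (fun i => c * x i) = c • Evec x := rfl
  rw [enorm_eq, enorm_eq, this, norm_smul, Real.norm_eq_abs]

lemma enorm_add_sub_le {n : ℕ} (p q s : Fin n → ℝ) :
    vecEnorm (fun i => p i + q i - s i) ≤ vecEnorm p + vecEnorm q + vecEnorm s := by
  have : Evec (fun i => p i + q i - s i) = Evec p + Evec q - Evec s := rfl
  rw [enorm_eq, enorm_eq, enorm_eq, enorm_eq, this]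
  calc ‖Evec p + Evec q - Evec s‖ ≤ ‖Evec p + Evec q‖ + ‖Evec s‖ := norm_sub_le _ _
    _ ≤ ‖Evec p‖ + ‖Evec q‖ + ‖Evec s‖ := by linarith [norm_add_le (Evec p) (Evec q)]

lemma enorm_comb_le {n : ℕ} (c d : ℝ) (p q : Fin n → ℝ) :
    vecEnorm (fun i => c * p i + d * q i) ≤ |c| * vecEnorm p + |d| * vecEnorm q := by
  have : Evec (fun i => c * p i + d * q i) = c • Evec p + d • Evec q := rfl
  rw [enorm_eq, this]
  calc ‖c • Evec p + d • Evec q‖ ≤ ‖c • Evec p‖ + ‖d • Evec q‖ := norm_add_le _ _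
    _ = |c| * vecEnorm p + |d| * vecEnorm q := by
        rw [norm_smul, norm_smul, Real.norm_eq_abs, Real.norm_eq_abs, enorm_eq, enorm_eq]

/-! ### Auxiliary lemmas on the block matrix -/

lemma blk_mulVec_castSucc (X : Matrix (Fin 2) (Fin 2) ℝ) (u v : Fin 2 → ℝ) (c : ℝ)
    (x : Fin 3 → ℝ) (i : Fin 2) :
    ((blk X u v c) *ᵥ x) i.castSucc
      = (∑ j : Fin 2, X i j * x j.castSucc) + u i * x (Fin.last 2) := by
  simp [blk, Matrix.mulVec, dotProduct, Fin.sum_univ_castSucc]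
  simp [Fin.snoc]

lemma blk_mulVec_last (X : Matrix (Fin 2) (Fin 2) ℝ) (u v : Fin 2 → ℝ) (c : ℝ)
    (x : Fin 3 → ℝ) :
    ((blk X u v c) *ᵥ x) (Fin.last 2)
      = (∑ j : Fin 2, v j * x j.castSucc) + c * x (Fin.last 2) := by
  simp [blk, Matrix.mulVec, dotProduct, Fin.sum_univ_castSucc, Fin.snoc]

lemma sub_smul_mulVec (A : Matrix (Fin 3) (Fin 3) ℝ) (a : ℝ) (x : Fin 3 → ℝ) (k : Fin 3) :
    ((A - a • 1) *ᵥ x) k = (A *ᵥ x) k - a * x k := by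
  rw [Matrix.sub_mulVec, Matrix.smul_mulVec, Matrix.one_mulVec]
  simp

lemma dot_split (x y : Fin 3 → ℝ) :
    x ⬝ᵥ y = (∑ j : Fin 2, x j.castSucc * y j.castSucc)
      + x (Fin.last 2) * y (Fin.last 2) := by
  simp [dotProduct, Fin.sum_univ_castSucc]

set_option maxHeartbeats 1000000 in
theorem technical_lemma (M : Matrix (Fin 2) (Fin 2) ℝ) (h r : Fin 2 → ℝ) (t : ℝ)
    (h0 : ∃ a₀ : ℝ, ∀ a ≥ a₀, a ∈ sigmaL (blk M r h (a + t))) :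
    (∃ a₁ : ℝ, ∀ a ≥ a₁, a ∈ sigmaInt (blk M r h (a + t))) ∧
    t = 0 ∧ h ⬝ᵥ r = 0 ∧ h ⬝ᵥ (M.adjugate *ᵥ r) = 0 := by
  obtain ⟨a₀, H⟩ := h0
  set CM : ℝ := vecEnorm (fun i => M i 0) + vecEnorm (fun i => M i 1) with hCMdef
  set D : ℝ := vecEnorm h + |t| + vecEnorm r with hDdef
  have hCM0 : 0 ≤ CM := by
    have := enorm_nonneg' (fun i => M i 0)
    have := enorm_nonneg' (fun i => M i 1)
    rw [hCMdef]; linarith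
  have hD0 : 0 ≤ D := by
    have := enorm_nonneg' h
    have := enorm_nonneg' r
    have := abs_nonneg t
    rw [hDdef]; linarith
  set A1 : ℝ := max a₀ (CM + D + 1) with hA1def
  have hA1big : CM + D + 1 ≤ A1 := le_max_right _ _
  have key : ∀ a : ℝ, A1 ≤ a → a ∈ sigmaInt (blk M r h (a + t)) ∧
      t * (a ^ 2 - (M 0 0 + M 1 1) * a + (M 0 0 * M 1 1 - M 0 1 * M 1 0))
        + a * (h 0 * r 0 + h 1 * r 1)
        - (h 0 * (M 1 1 * r 0 - M 0 1 * r 1) + h 1 * (M 0 0 * r 1 - M 1 0 * r 0)) = 0 := by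
    intro a ha
    have haCD : CM + D + 1 ≤ a := le_trans hA1big ha
    obtain ⟨x, hx0, hxK, hyK, hor⟩ := H a (le_trans (le_max_left _ _) ha)
    set ξ : Fin 2 → ℝ := fun i => x i.castSucc with hξdef
    set η : ℝ := x (Fin.last 2) with hηdef
    set y : Fin 3 → ℝ := (blk M r h (a + t) - a • (1 : Matrix (Fin 3) (Fin 3) ℝ)) *ᵥ x with hydef
    set ζ : Fin 2 → ℝ := fun i => y i.castSucc with hζdef
    set μ : ℝ := y (Fin.last 2) with hμdef
    have hxK' : vecEnorm ξ ≤ η := hxK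
    have hζμ : vecEnorm ζ ≤ μ := hyK
    have hyc : ∀ i : Fin 2, ζ i = (∑ j : Fin 2, M i j * ξ j) + r i * η - a * ξ i := by
      intro i
      show y i.castSucc = _
      rw [hydef, sub_smul_mulVec, blk_mulVec_castSucc]
    have hyl : μ = (∑ j : Fin 2, h j * ξ j) + t * η := by
      show y (Fin.last 2) = _
      rw [hydef, sub_smul_mulVec, blk_mulVec_last]
      ring
    have hor' : (∑ j : Fin 2, ξ j * ζ j) + η * μ = 0 := by
      have := hor
      rw [dot_split] at this
      exact this
    -- positivity of η
    have hηpos : 0 < η := by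
      rcases lt_or_ge 0 η with hp | hn
      · exact hp
      · exfalso
        have hξ0 : vecEnorm ξ = 0 :=
          le_antisymm (le_trans hxK' hn) (enorm_nonneg' ξ)
        have hη0 : η = 0 := le_antisymm hn (le_trans (enorm_nonneg' ξ) hxK')
        apply hx0
        funext k
        refine Fin.lastCases ?_ ?_ k
        · exact hη0
        · intro i
          exact congrFun (vecEnorm_eq_zero' hξ0) i
    -- the norm bound giving interiority
    have hwbound : vecEnorm (fun i => ∑ j : Fin 2, M i j * ξ j) ≤ vecEnorm ξ * CM := by
      have h1 : (fun i : Fin 2 => ∑ j : Fin 2, M i j * ξ j)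
          = fun i => ξ 0 * M i 0 + ξ 1 * M i 1 := by
        funext i; rw [Fin.sum_univ_two]; ring
      rw [h1]
      have h2 := enorm_comb_le (ξ 0) (ξ 1) (fun i => M i 0) (fun i => M i 1)
      have h3 := abs_le_enorm ξ 0
      have h4 := abs_le_enorm ξ 1
      have h5 := enorm_nonneg' (fun i => M i 0)
      have h6 := enorm_nonneg' (fun i => M i 1)
      have h7 := abs_nonneg (ξ 0)
      have h8 := abs_nonneg (ξ 1)
      rw [hCMdef]
      nlinarith
    have hμbound : μ ≤ vecEnorm h * η + |t| * η := by
      have h1 : (∑ j : Fin 2, h j * ξ j) = h ⬝ᵥ ξ := rfl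
      have h2 := dot_le_enorm h ξ
      have h3 := enorm_nonneg' h
      have h4 : t * η ≤ |t| * η := by
        have := le_abs_self t
        nlinarith
      rw [hyl, h1]
      nlinarith [hxK']
    have haξ : a * vecEnorm ξ ≤ vecEnorm ξ * CM + η * vecEnorm r + μ := by
      have h1 : (fun i => a * ξ i)
          = fun i => (∑ j : Fin 2, M i j * ξ j) + η * r i - ζ i := by
        funext i
        have := hyc i
        push_cast at this ⊢
        linarith [this]
      have h2 : vecEnorm (fun i => a * ξ i) = |a| * vecEnorm ξ := enorm_smul' a ξ
      have h3 := enorm_add_sub_le (fun i => ∑ j : Fin 2, M i j * ξ j)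
        (fun i => η * r i) ζ
      rw [h1] at h2
      have h4 : vecEnorm (fun i => η * r i) = |η| * vecEnorm r := enorm_smul' η r
      have h5 : |η| = η := abs_of_pos hηpos
      have h6 : |a| = a := abs_of_nonneg (by linarith)
      rw [h4, h5] at h3
      rw [h6] at h2
      linarith [h2 ▸ h3, hwbound, hζμ]
    have hint : vecEnorm ξ < η := by
      have hX0 := enorm_nonneg' ξ
      have hcomb : a * vecEnorm ξ ≤ vecEnorm ξ * CM + η * vecEnorm r + vecEnorm h * η + |t| * η := by
        linarith [haξ, hμbound]
      by_contra hcon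
      push_neg at hcon
      have hDd : vecEnorm h * η + |t| * η + η * vecEnorm r = D * η := by rw [hDdef]; ring
      nlinarith [hcomb, hcon, hηpos, haCD, hX0, hCM0, hD0]
    -- complementarity forces y = 0
    have hμ0 : μ = 0 := by
      have hcs := neg_dot_le_enorm ξ ζ
      have hξζ : ξ ⬝ᵥ ζ = ∑ j : Fin 2, ξ j * ζ j := rfl
      rw [hξζ] at hcs
      have hζ0 := enorm_nonneg' ζ
      have hμ0' : 0 ≤ μ := le_trans hζ0 hζμ
      have hξη := enorm_nonneg' ξ
      have s1 : vecEnorm ξ * vecEnorm ζ ≤ vecEnorm ξ * μ := mul_le_mul_of_nonneg_left hζμ hξη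
      have s2 : η * μ ≤ vecEnorm ξ * μ := by linarith
      rcases eq_or_lt_of_le hμ0' with heq | hlt
      · exact heq.symm
      · exfalso
        nlinarith [s2, hint, hlt]
    have hζ0 : ζ = 0 := by
      apply vecEnorm_eq_zero'
      exact le_antisymm (hμ0 ▸ hζμ) (enorm_nonneg' ζ)
    -- the three scalar equations
    have e0 : M 0 0 * ξ 0 + M 0 1 * ξ 1 + r 0 * η - a * ξ 0 = 0 := by
      have := (hyc 0).symm.trans (congrFun hζ0 0)
      rw [Fin.sum_univ_two] at this
      simpa using this
    have e1 : M 1 0 * ξ 0 + M 1 1 * ξ 1 + r 1 * η - a * ξ 1 = 0 := by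
      have := (hyc 1).symm.trans (congrFun hζ0 1)
      rw [Fin.sum_univ_two] at this
      simpa using this
    have e2 : h 0 * ξ 0 + h 1 * ξ 1 + t * η = 0 := by
      have := hyl.symm.trans hμ0
      rw [Fin.sum_univ_two] at this
      linarith [this]
    constructor
    · exact ⟨x, ⟨hx0, hxK, hyK, hor⟩, hint⟩
    · have hQ : η * (t * (a ^ 2 - (M 0 0 + M 1 1) * a + (M 0 0 * M 1 1 - M 0 1 * M 1 0))
          + a * (h 0 * r 0 + h 1 * r 1)
          - (h 0 * (M 1 1 * r 0 - M 0 1 * r 1) + h 1 * (M 0 0 * r 1 - M 1 0 * r 0))) = 0 := by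
        linear_combination (h 1 * M 1 0 - h 0 * (M 1 1 - a)) * e0
          + (h 0 * M 0 1 - h 1 * (M 0 0 - a)) * e1
          + (a ^ 2 - (M 0 0 + M 1 1) * a + (M 0 0 * M 1 1 - M 0 1 * M 1 0)) * e2
      exact (mul_eq_zero.mp hQ).resolve_left (ne_of_gt hηpos)
  refine ⟨⟨A1, fun a ha => (key a ha).1⟩, ?_⟩
  have qu := (key A1 le_rfl).2
  have qv := (key (A1 + 1) (by linarith)).2
  have qw := (key (A1 + 2) (by linarith)).2
  have ht : t = 0 := by linear_combination (qw - 2 * qv + qu) / 2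
  have hc0 : h 0 * r 0 + h 1 * r 1 = 0 := by
    linear_combination qv - qu + (M 0 0 + M 1 1 - (2 * A1 + 1)) * ht
  have hc1 : h 0 * (M 1 1 * r 0 - M 0 1 * r 1) + h 1 * (M 0 0 * r 1 - M 1 0 * r 0) = 0 := by
    linear_combination -qu
      + (A1 ^ 2 - (M 0 0 + M 1 1) * A1 + (M 0 0 * M 1 1 - M 0 1 * M 1 0)) * ht
      + A1 * hc0
  refine ⟨ht, ?_, ?_⟩
  · have : h ⬝ᵥ r = h 0 * r 0 + h 1 * r 1 := by
      simp [dotProduct, Fin.sum_univ_two]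
    rw [this]; exact hc0
  · have : h ⬝ᵥ (M.adjugate *ᵥ r)
        = h 0 * (M 1 1 * r 0 - M 0 1 * r 1) + h 1 * (M 0 0 * r 1 - M 1 0 * r 0) := by
      rw [Matrix.adjugate_fin_two]
      simp [Matrix.mulVec, dotProduct, Fin.sum_univ_two]
      ring
    rw [this]; exact hc1
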